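/- Let L be an e-cyclic residuated lattice. Then every prime convex subalgebra P ≠ L of L contains a minimal prime convex subalgebra of L, and the intersection of all minimal prime convex subalgebras of L equals {e}. -/

import Mathlib

universe u

/-- A residuated lattice: a lattice-ordered monoid with left and right residuals.
`ldiv x z` is `x \ z` and `rdiv z y` is `z / y`. -/
class ResiduatedLattice (α : Type u) extends Lattice α, Monoid α where
  ldiv : α → α → α
  rdiv : α → α → α
  mul_le_iff_le_ldiv : ∀ x y z : α, x * y ≤ z ↔ y ≤ ldiv x z
  mul_le_iff_le_rdiv : ∀ x y z : α, x * y ≤ z ↔ x ≤ rdiv z y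

namespace ResiduatedLattice

variable {α : Type u} [ResiduatedLattice α]

/-- `L` is e-cyclic if `x \ e = e / x` for all `x`. -/
def ECyclic (α : Type u) [ResiduatedLattice α] : Prop :=
  ∀ x : α, ldiv x 1 = rdiv 1 x

/-- Absolute value: `|x| = x ⊓ (e / x) ⊓ e`. -/
def absv (x : α) : α := x ⊓ rdiv 1 x ⊓ 1

/-- A convex subalgebra: contains `e`, closed under all the operations, and order-convex. -/
structure IsConvexSubalgebra (H : Set α) : Prop where
  one_mem : (1 : α) ∈ H
  mul_mem : ∀ ⦃x⦄, x ∈ H → ∀ ⦃y⦄, y ∈ H → x * y ∈ H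
  sup_mem : ∀ ⦃x⦄, x ∈ H → ∀ ⦃y⦄, y ∈ H → x ⊔ y ∈ H
  inf_mem : ∀ ⦃x⦄, x ∈ H → ∀ ⦃y⦄, y ∈ H → x ⊓ y ∈ H
  ldiv_mem : ∀ ⦃x⦄, x ∈ H → ∀ ⦃y⦄, y ∈ H → ldiv x y ∈ H
  rdiv_mem : ∀ ⦃x⦄, x ∈ H → ∀ ⦃y⦄, y ∈ H → rdiv x y ∈ H
  convex : ∀ ⦃a⦄, a ∈ H → ∀ ⦃b⦄, b ∈ H → ∀ ⦃x⦄, a ≤ x → x ≤ b → x ∈ H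

/-- `C[S]`: the smallest convex subalgebra containing `S`. -/
def convexClosure (S : Set α) : Set α :=
  ⋂₀ {H : Set α | IsConvexSubalgebra H ∧ S ⊆ H}

end ResiduatedLattice

open ResiduatedLattice

/-- A prime convex subalgebra: a convex subalgebra that is meet-irreducible in the
lattice of convex subalgebras. -/
def IsPrimeConvex {α : Type u} [ResiduatedLattice α] (H : Set α) : Prop :=
  IsConvexSubalgebra H ∧
  ∀ X Y : Set α, IsConvexSubalgebra X → IsConvexSubalgebra Y →
    X ∩ Y ⊆ H → X ⊆ H ∨ Y ⊆ H

/-- A minimal prime convex subalgebra. -/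
def IsMinimalPrimeConvex {α : Type u} [ResiduatedLattice α] (P : Set α) : Prop :=
  IsPrimeConvex P ∧ P ≠ Set.univ ∧
  ∀ Q : Set α, IsPrimeConvex Q → Q ≠ Set.univ → Q ⊆ P → Q = P

/-!
Minimal primes below a proper prime `P` exist by Zorn's lemma, because the intersection of a
chain of primes is prime.

For `a ≠ e`, a convex subalgebra `V` maximal with `a ∉ V` is prime. In an e-cyclic lattice the
convex subalgebra generated by `V` and a negative `c ∉ V` consists of the `w` with
`(g c)ⁿ g ≤ |w|` for some negative `g ∈ V`, so it contains `a`. If `X ∩ Y ⊆ V` but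
`|x| ∈ X \ V` and `|y| ∈ Y \ V`, this gives `(g |x|)ⁿ g ≤ |a|` and `(g |y|)ᵐ g ≤ |a|`, hence
`(g (|x| ∨ |y|))ⁿ⁺ᵐ g ≤ |a|`; as `|x| ∨ |y| ∈ X ∩ Y ⊆ V`, this puts `a` in `V`.
A minimal prime below `V` then avoids `a`.
-/

namespace ResiduatedLattice

variable {α : Type u} [ResiduatedLattice α]

theorem mul_ldiv_le (x y : α) : x * ldiv x y ≤ y :=
  (mul_le_iff_le_ldiv x (ldiv x y) y).mpr le_rfl

theorem rdiv_mul_le (x y : α) : rdiv y x * x ≤ y :=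
  (mul_le_iff_le_rdiv (rdiv y x) x y).mpr le_rfl

instance : MulLeftMono α :=
  ⟨fun a b c h => (mul_le_iff_le_ldiv a b (a * c)).mpr
    (h.trans ((mul_le_iff_le_ldiv a c (a * c)).mp le_rfl))⟩

instance : MulRightMono α :=
  ⟨fun a b c h => (mul_le_iff_le_rdiv b a (c * a)).mpr
    (h.trans ((mul_le_iff_le_rdiv c a (c * a)).mp le_rfl))⟩

theorem mul_sup_le (a b c : α) : a * (b ⊔ c) ≤ a * b ⊔ a * c :=
  (mul_le_iff_le_ldiv _ _ _).mpr (sup_le ((mul_le_iff_le_ldiv _ _ _).mp le_sup_left)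
    ((mul_le_iff_le_ldiv _ _ _).mp le_sup_right))

theorem sup_mul_le (a b c : α) : (a ⊔ b) * c ≤ a * c ⊔ b * c :=
  (mul_le_iff_le_rdiv _ _ _).mpr (sup_le ((mul_le_iff_le_rdiv _ _ _).mp le_sup_left)
    ((mul_le_iff_le_rdiv _ _ _).mp le_sup_right))

theorem ldiv_one_one : ldiv (1 : α) 1 = 1 :=
  le_antisymm (by simpa using mul_ldiv_le (1 : α) 1) ((mul_le_iff_le_ldiv 1 1 1).mp (by simp))

theorem rdiv_one_one : rdiv (1 : α) 1 = 1 :=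
  le_antisymm (by simpa using rdiv_mul_le (1 : α) 1) ((mul_le_iff_le_rdiv 1 1 1).mp (by simp))

theorem le_absv_iff {s w : α} : s ≤ absv w ↔ s ≤ w ∧ s * w ≤ 1 ∧ s ≤ 1 := by
  simp only [absv, le_inf_iff, mul_le_iff_le_rdiv, and_assoc]

theorem absv_le_self (x : α) : absv x ≤ x := (le_absv_iff.mp le_rfl).1

theorem absv_mul_le_one (x : α) : absv x * x ≤ 1 := (le_absv_iff.mp le_rfl).2.1

theorem absv_le_one (x : α) : absv x ≤ 1 := (le_absv_iff.mp le_rfl).2.2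

theorem mul_absv_le_one (hec : ECyclic α) (x : α) : x * absv x ≤ 1 := by
  rw [mul_le_iff_le_ldiv, hec x, ← mul_le_iff_le_rdiv]
  exact absv_mul_le_one x

theorem absv_of_le_one {a : α} (ha : a ≤ 1) : absv a = a :=
  le_antisymm (absv_le_self a) (le_absv_iff.mpr ⟨le_rfl, mul_le_one' ha ha, ha⟩)

section AbsvBounds

variable {s x y : α}

theorem le_absv_mul (h₁ : s ≤ absv x * absv y) (h₂ : s ≤ absv y * absv x) :
    s ≤ absv (x * y) := by
  refine le_absv_iff.mpr ⟨h₁.trans (mul_le_mul' (absv_le_self x) (absv_le_self y)), ?_,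
    h₁.trans (mul_le_one' (absv_le_one x) (absv_le_one y))⟩
  calc s * (x * y) ≤ absv y * absv x * (x * y) := mul_le_mul_left h₂ _
    _ = absv y * (absv x * x) * y := by simp only [mul_assoc]
    _ ≤ absv y * y := by gcongr; exact mul_le_of_le_one_right' (absv_mul_le_one x)
    _ ≤ 1 := absv_mul_le_one y

theorem le_absv_sup (h : s ≤ absv x * absv y) : s ≤ absv (x ⊔ y) := by
  have hx : s ≤ absv x := h.trans (mul_le_of_le_one_right' (absv_le_one y))
  have hy : s ≤ absv y := h.trans (mul_le_of_le_one_left' (absv_le_one x))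
  refine le_absv_iff.mpr ⟨(hx.trans (absv_le_self x)).trans le_sup_left, ?_,
    hx.trans (absv_le_one x)⟩
  calc s * (x ⊔ y) ≤ s * x ⊔ s * y := mul_sup_le s x y
    _ ≤ 1 := sup_le ((mul_le_mul_left hx x).trans (absv_mul_le_one x))
        ((mul_le_mul_left hy y).trans (absv_mul_le_one y))

theorem le_absv_inf (h : s ≤ absv x * absv y) : s ≤ absv (x ⊓ y) := by
  have hx : s ≤ absv x := h.trans (mul_le_of_le_one_right' (absv_le_one y))
  have hy : s ≤ absv y := h.trans (mul_le_of_le_one_left' (absv_le_one x))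
  refine le_absv_iff.mpr ⟨le_inf (hx.trans (absv_le_self x)) (hy.trans (absv_le_self y)), ?_,
    hx.trans (absv_le_one x)⟩
  calc s * (x ⊓ y) ≤ absv x * x := mul_le_mul' hx inf_le_left
    _ ≤ 1 := absv_mul_le_one x

theorem le_absv_ldiv (hec : ECyclic α) (h₁ : s ≤ absv x * absv y)
    (h₂ : s ≤ absv y * absv x) : s ≤ absv (ldiv x y) := by
  refine le_absv_iff.mpr ⟨(mul_le_iff_le_ldiv _ _ _).mp ?_, ?_,
    h₁.trans (mul_le_one' (absv_le_one x) (absv_le_one y))⟩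
  · calc x * s ≤ x * absv x * absv y := by rw [mul_assoc]; gcongr
      _ ≤ absv y := mul_le_of_le_one_left' (mul_absv_le_one hec x)
      _ ≤ y := absv_le_self y
  · calc s * ldiv x y ≤ absv y * (x * ldiv x y) := by
          rw [← mul_assoc]; gcongr; exact h₂.trans (by gcongr; exact absv_le_self x)
      _ ≤ absv y * y := by gcongr; exact mul_ldiv_le x y
      _ ≤ 1 := absv_mul_le_one y

theorem le_absv_rdiv (hec : ECyclic α) (h₁ : s ≤ absv x * absv y)
    (h₂ : s ≤ absv y * absv x) : s ≤ absv (rdiv x y) := by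
  have hxy : absv x * rdiv x y ≤ ldiv y 1 := by
    rw [hec y, ← mul_le_iff_le_rdiv, mul_assoc]
    calc absv x * (rdiv x y * y) ≤ absv x * x := by gcongr; exact rdiv_mul_le y x
      _ ≤ 1 := absv_mul_le_one x
  refine le_absv_iff.mpr ⟨(mul_le_iff_le_rdiv _ _ _).mp ?_, ?_,
    h₁.trans (mul_le_one' (absv_le_one x) (absv_le_one y))⟩
  · calc s * y ≤ absv x * (absv y * y) := by rw [← mul_assoc]; gcongr
      _ ≤ absv x := mul_le_of_le_one_right' (absv_mul_le_one y)
      _ ≤ x := absv_le_self x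
  · calc s * rdiv x y ≤ y * (absv x * rdiv x y) := by
          rw [← mul_assoc]; gcongr; exact h₂.trans (by gcongr; exact absv_le_self y)
      _ ≤ y * ldiv y 1 := by gcongr
      _ ≤ 1 := mul_ldiv_le y 1

theorem le_absv_of_le_of_le {a b : α} (h : s ≤ absv a * absv b) (hax : a ≤ x) (hxb : x ≤ b) :
    s ≤ absv x := by
  have ha : s ≤ absv a := h.trans (mul_le_of_le_one_right' (absv_le_one b))
  have hb : s ≤ absv b := h.trans (mul_le_of_le_one_left' (absv_le_one a))
  refine le_absv_iff.mpr ⟨(ha.trans (absv_le_self a)).trans hax, ?_, ha.trans (absv_le_one a)⟩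
  calc s * x ≤ absv b * b := mul_le_mul' hb hxb
    _ ≤ 1 := absv_mul_le_one b

end AbsvBounds

namespace IsConvexSubalgebra

variable {H : Set α}

theorem absv_mem (hH : IsConvexSubalgebra H) {x : α} (hx : x ∈ H) : absv x ∈ H :=
  hH.inf_mem (hH.inf_mem hx (hH.rdiv_mem hH.one_mem hx)) hH.one_mem

theorem mem_of_absv_mem (hec : ECyclic α) (hH : IsConvexSubalgebra H) {x : α}
    (hx : absv x ∈ H) : x ∈ H :=
  hH.convex hx (hH.rdiv_mem hH.one_mem hx) (absv_le_self x)
    ((mul_le_iff_le_rdiv _ _ _).mp (mul_absv_le_one hec x))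

theorem pow_mem (hH : IsConvexSubalgebra H) {x : α} (hx : x ∈ H) (n : ℕ) : x ^ n ∈ H := by
  induction n with
  | zero => simpa using hH.one_mem
  | succ n ih => simpa [pow_succ] using hH.mul_mem ih hx

def negCone (hH : IsConvexSubalgebra H) : Submonoid α where
  carrier := {x | x ∈ H ∧ x ≤ 1}
  mul_mem' hx hy := ⟨hH.mul_mem hx.1 hy.1, mul_le_one' hx.2 hy.2⟩
  one_mem' := ⟨hH.one_mem, le_rfl⟩

end IsConvexSubalgebra

theorem isConvexSubalgebra_singleton_one : IsConvexSubalgebra ({1} : Set α) where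
  one_mem := rfl
  mul_mem := by rintro _ rfl _ rfl; simp
  sup_mem := by rintro _ rfl _ rfl; simp
  inf_mem := by rintro _ rfl _ rfl; simp
  ldiv_mem := by rintro _ rfl _ rfl; exact ldiv_one_one
  rdiv_mem := by rintro _ rfl _ rfl; exact rdiv_one_one
  convex := by rintro _ rfl _ rfl x h₁ h₂; exact le_antisymm h₂ h₁

theorem isConvexSubalgebra_sInter {c : Set (Set α)} (h : ∀ H ∈ c, IsConvexSubalgebra H) :
    IsConvexSubalgebra (⋂₀ c) where
  one_mem H hH := (h H hH).one_mem
  mul_mem _ hx _ hy H hH := (h H hH).mul_mem (hx H hH) (hy H hH)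
  sup_mem _ hx _ hy H hH := (h H hH).sup_mem (hx H hH) (hy H hH)
  inf_mem _ hx _ hy H hH := (h H hH).inf_mem (hx H hH) (hy H hH)
  ldiv_mem _ hx _ hy H hH := (h H hH).ldiv_mem (hx H hH) (hy H hH)
  rdiv_mem _ hx _ hy H hH := (h H hH).rdiv_mem (hx H hH) (hy H hH)
  convex _ ha _ hb _ h₁ h₂ H hH := (h H hH).convex (ha H hH) (hb H hH) h₁ h₂

theorem isConvexSubalgebra_sUnion {c : Set (Set α)} (hne : c.Nonempty)
    (hc : IsChain (· ⊆ ·) c) (h : ∀ H ∈ c, IsConvexSubalgebra H) :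
    IsConvexSubalgebra (⋃₀ c) := by
  have common : ∀ {x y : α}, x ∈ ⋃₀ c → y ∈ ⋃₀ c → ∃ H ∈ c, x ∈ H ∧ y ∈ H := by
    rintro x y ⟨H, hH, hx⟩ ⟨K, hK, hy⟩
    obtain ⟨M, hM, hHM, hKM⟩ := hc.directedOn H hH K hK
    exact ⟨M, hM, hHM hx, hKM hy⟩
  obtain ⟨H₀, hH₀⟩ := hne
  exact
  { one_mem := ⟨H₀, hH₀, (h H₀ hH₀).one_mem⟩
    mul_mem := fun _ hx _ hy =>
      let ⟨H, hH, hx, hy⟩ := common hx hy; ⟨H, hH, (h H hH).mul_mem hx hy⟩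
    sup_mem := fun _ hx _ hy =>
      let ⟨H, hH, hx, hy⟩ := common hx hy; ⟨H, hH, (h H hH).sup_mem hx hy⟩
    inf_mem := fun _ hx _ hy =>
      let ⟨H, hH, hx, hy⟩ := common hx hy; ⟨H, hH, (h H hH).inf_mem hx hy⟩
    ldiv_mem := fun _ hx _ hy =>
      let ⟨H, hH, hx, hy⟩ := common hx hy; ⟨H, hH, (h H hH).ldiv_mem hx hy⟩
    rdiv_mem := fun _ hx _ hy =>
      let ⟨H, hH, hx, hy⟩ := common hx hy; ⟨H, hH, (h H hH).rdiv_mem hx hy⟩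
    convex := fun _ ha _ hb _ h₁ h₂ =>
      let ⟨H, hH, ha, hb⟩ := common ha hb; ⟨H, hH, (h H hH).convex ha hb h₁ h₂⟩ }

/-- For `T ≤ 1` in an e-cyclic lattice this is `C[T]`. -/
def convexSpan (T : Set α) : Set α :=
  {w | ∃ p ∈ Submonoid.closure T, p ≤ absv w}

theorem isConvexSubalgebra_convexSpan (hec : ECyclic α) {T : Set α} (hT : ∀ t ∈ T, t ≤ 1) :
    IsConvexSubalgebra (convexSpan T) := by
  have hle : ∀ p ∈ Submonoid.closure T, p ≤ 1 := fun p hp =>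
    Submonoid.closure_induction hT le_rfl (fun _ _ _ _ => mul_le_one') hp
  have witness : ∀ {x y : α}, x ∈ convexSpan T → y ∈ convexSpan T →
      ∃ s ∈ Submonoid.closure T, s ≤ absv x * absv y ∧ s ≤ absv y * absv x := by
    rintro x y ⟨p, hp, hpx⟩ ⟨q, hq, hqy⟩
    refine ⟨p * q * (q * p), mul_mem (mul_mem hp hq) (mul_mem hq hp), ?_, ?_⟩
    · exact (mul_le_of_le_one_right' (mul_le_one' (hle q hq) (hle p hp))).trans
        (mul_le_mul' hpx hqy)
    · exact (mul_le_of_le_one_left' (mul_le_one' (hle p hp) (hle q hq))).trans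
        (mul_le_mul' hqy hpx)
  exact
  { one_mem := ⟨1, one_mem _, (absv_of_le_one le_rfl).ge⟩
    mul_mem := fun _ hx _ hy =>
      let ⟨s, hs, h₁, h₂⟩ := witness hx hy; ⟨s, hs, le_absv_mul h₁ h₂⟩
    sup_mem := fun _ hx _ hy =>
      let ⟨s, hs, h₁, _⟩ := witness hx hy; ⟨s, hs, le_absv_sup h₁⟩
    inf_mem := fun _ hx _ hy =>
      let ⟨s, hs, h₁, _⟩ := witness hx hy; ⟨s, hs, le_absv_inf h₁⟩
    ldiv_mem := fun _ hx _ hy =>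
      let ⟨s, hs, h₁, h₂⟩ := witness hx hy; ⟨s, hs, le_absv_ldiv hec h₁ h₂⟩
    rdiv_mem := fun _ hx _ hy =>
      let ⟨s, hs, h₁, h₂⟩ := witness hx hy; ⟨s, hs, le_absv_rdiv hec h₁ h₂⟩
    convex := fun _ ha _ hb _ h₁ h₂ =>
      let ⟨s, hs, hab, _⟩ := witness ha hb; ⟨s, hs, le_absv_of_le_of_le hab h₁ h₂⟩ }

theorem exists_pow_mul_le_of_mem_closure_insert {S : Submonoid α} (hS : ∀ g ∈ S, g ≤ 1)
    {c p : α} (hp : p ∈ Submonoid.closure (S ∪ {c})) :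
    ∃ g ∈ S, ∃ n : ℕ, (g * c) ^ n * g ≤ p := by
  induction hp using Submonoid.closure_induction with
  | mem x hx =>
    rcases hx with hx | rfl
    · exact ⟨x, hx, 0, by simp⟩
    · exact ⟨1, S.one_mem, 1, by simp⟩
  | one => exact ⟨1, S.one_mem, 0, by simp⟩
  | mul x y _ _ ihx ihy =>
    obtain ⟨g₁, hg₁, n₁, hx⟩ := ihx
    obtain ⟨g₂, hg₂, n₂, hy⟩ := ihy
    have h₁ : g₁ * g₂ ≤ g₁ := mul_le_of_le_one_right' (hS g₂ hg₂)
    have h₂ : g₁ * g₂ ≤ g₂ := mul_le_of_le_one_left' (hS g₁ hg₁)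
    refine ⟨g₁ * g₂, S.mul_mem hg₁ hg₂, n₁ + n₂, ?_⟩
    -- `(g c)ⁿ g = g (c g)ⁿ` splits the middle factor `g = g₁ g₂` between the two words.
    calc (g₁ * g₂ * c) ^ (n₁ + n₂) * (g₁ * g₂)
        = ((g₁ * g₂ * c) ^ n₁ * g₁) * (g₂ * (c * (g₁ * g₂)) ^ n₂) := by
          rw [pow_add, mul_assoc, mul_pow_mul]; simp only [mul_assoc]
      _ ≤ ((g₁ * c) ^ n₁ * g₁) * (g₂ * (c * g₂) ^ n₂) := by gcongr
      _ = ((g₁ * c) ^ n₁ * g₁) * ((g₂ * c) ^ n₂ * g₂) := by rw [mul_pow_mul g₂ c]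
      _ ≤ x * y := mul_le_mul' hx hy

theorem mul_sup_le_pow_succ_mul_sup {a : α} (ha : a ≤ 1) (b d : α) (n : ℕ) :
    a * (a ^ n * b ⊔ d) ≤ a ^ (n + 1) * b ⊔ d :=
  (mul_sup_le _ _ _).trans <| sup_le_sup (by rw [pow_succ', mul_assoc])
    (mul_le_of_le_one_left' ha)

theorem pow_add_mul_le_sup {g u v : α} (hg : g ≤ 1) (hu : u ≤ 1) (hv : v ≤ 1) (n m : ℕ) :
    (g * (u ⊔ v)) ^ (n + m) * g ≤ (g * u) ^ n * g ⊔ (g * v) ^ m * g := by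
  have hle : ∀ k, (g * (u ⊔ v)) ^ k * g ≤ g := fun k =>
    mul_le_of_le_one_left' (pow_le_one' (mul_le_one' hg (sup_le hu hv)) k)
  induction n generalizing m with
  | zero => exact (hle _).trans (by simp)
  | succ n ihn =>
    induction m with
    | zero => exact (hle _).trans (by simp)
    | succ m ihm =>
      have hA₁ := ihn (m + 1)
      have hA₂ : (g * (u ⊔ v)) ^ (n + (m + 1)) * g
          ≤ (g * u) ^ (n + 1) * g ⊔ (g * v) ^ m * g := by
        rwa [← Nat.add_right_comm, Nat.add_assoc] at ihm
      rw [show n + 1 + (m + 1) = n + (m + 1) + 1 by omega, pow_succ', mul_assoc]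
      calc g * (u ⊔ v) * ((g * (u ⊔ v)) ^ (n + (m + 1)) * g)
          ≤ g * u * ((g * (u ⊔ v)) ^ (n + (m + 1)) * g)
            ⊔ g * v * ((g * (u ⊔ v)) ^ (n + (m + 1)) * g) :=
            (mul_le_mul_left (mul_sup_le g u v) _).trans (sup_mul_le _ _ _)
        _ ≤ _ := sup_le
            ((mul_le_mul_right hA₁ _).trans
              (mul_sup_le_pow_succ_mul_sup (mul_le_one' hg hu) _ _ _))
            ((mul_le_mul_right hA₂ _).trans (by
              rw [sup_comm, sup_comm ((g * u) ^ (n + 1) * g)]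
              exact mul_sup_le_pow_succ_mul_sup (mul_le_one' hg hv) _ _ _))

def IsValue (a : α) (V : Set α) : Prop :=
  Maximal (fun H => IsConvexSubalgebra H ∧ a ∉ H) V

variable {a : α} {V : Set α}

theorem IsValue.exists_pow_mul_le_absv (hec : ECyclic α) (hV : IsValue a V) {c : α}
    (hc : c ≤ 1) (hcV : c ∉ V) :
    ∃ g ∈ V, g ≤ 1 ∧ ∃ n : ℕ, (g * c) ^ n * g ≤ absv a := by
  set S := hV.1.1.negCone
  have hS : ∀ g ∈ S, g ≤ 1 := fun g hg => hg.2
  have hW := isConvexSubalgebra_convexSpan hec (T := S ∪ {c}) <| by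
    rintro t (ht | rfl)
    exacts [hS t ht, hc]
  have hVW : V ⊆ convexSpan (S ∪ {c}) := fun w hw =>
    ⟨absv w, Submonoid.subset_closure (Or.inl ⟨hV.1.1.absv_mem hw, absv_le_one w⟩), le_rfl⟩
  have hcW : c ∈ convexSpan (S ∪ {c}) :=
    ⟨c, Submonoid.subset_closure (Or.inr rfl), (absv_of_le_one hc).ge⟩
  have haW : a ∈ convexSpan (S ∪ {c}) := by
    by_contra haW
    exact hcV (hV.2 ⟨hW, haW⟩ hVW hcW)
  obtain ⟨p, hp, hpa⟩ := haW
  obtain ⟨g, hg, n, hgp⟩ := exists_pow_mul_le_of_mem_closure_insert hS hp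
  exact ⟨g, hg.1, hg.2, n, hgp.trans hpa⟩

theorem IsValue.isPrimeConvex (hec : ECyclic α) (hV : IsValue a V) : IsPrimeConvex V := by
  have hVc := hV.1.1
  refine ⟨hVc, fun X Y hX hY hXY => ?_⟩
  by_contra! hXYV
  obtain ⟨x, hxX, hxV⟩ := Set.not_subset.mp hXYV.1
  obtain ⟨y, hyY, hyV⟩ := Set.not_subset.mp hXYV.2
  obtain ⟨g₁, hg₁V, hg₁, n, hn⟩ :=
    hV.exists_pow_mul_le_absv hec (absv_le_one x) fun h => hxV (hVc.mem_of_absv_mem hec h)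
  obtain ⟨g₂, hg₂V, hg₂, m, hm⟩ :=
    hV.exists_pow_mul_le_absv hec (absv_le_one y) fun h => hyV (hVc.mem_of_absv_mem hec h)
  have hz : absv x ⊔ absv y ≤ 1 := sup_le (absv_le_one x) (absv_le_one y)
  have hzV : absv x ⊔ absv y ∈ V := hXY
    ⟨hX.convex (hX.absv_mem hxX) hX.one_mem le_sup_left hz,
      hY.convex (hY.absv_mem hyY) hY.one_mem le_sup_right hz⟩
  have hgV : g₁ * g₂ ∈ V := hVc.mul_mem hg₁V hg₂V
  have hle : (g₁ * g₂ * (absv x ⊔ absv y)) ^ (n + m) * (g₁ * g₂) ≤ absv a := calc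
    _ ≤ (g₁ * g₂ * absv x) ^ n * (g₁ * g₂) ⊔ (g₁ * g₂ * absv y) ^ m * (g₁ * g₂) :=
        pow_add_mul_le_sup (mul_le_one' hg₁ hg₂) (absv_le_one x) (absv_le_one y) n m
    _ ≤ (g₁ * absv x) ^ n * g₁ ⊔ (g₂ * absv y) ^ m * g₂ := by
        have h₁ : g₁ * g₂ ≤ g₁ := mul_le_of_le_one_right' hg₂
        have h₂ : g₁ * g₂ ≤ g₂ := mul_le_of_le_one_left' hg₁
        gcongr
    _ ≤ absv a := sup_le hn hm
  have hmem := hVc.mul_mem (hVc.pow_mem (hVc.mul_mem hgV hzV) (n + m)) hgV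
  exact hV.1.2 (hVc.mem_of_absv_mem hec (hVc.convex hmem hVc.one_mem hle (absv_le_one a)))

theorem exists_isValue (ha : a ≠ 1) : ∃ V : Set α, IsValue a V := by
  obtain ⟨V, -, hV⟩ := zorn_subset_nonempty {H : Set α | IsConvexSubalgebra H ∧ a ∉ H}
    (fun c hcS hc hne => ⟨⋃₀ c,
      ⟨isConvexSubalgebra_sUnion hne hc fun H hH => (hcS hH).1,
        fun ⟨H, hH, haH⟩ => (hcS hH).2 haH⟩,
      fun _ => Set.subset_sUnion_of_mem⟩)
    {1} ⟨isConvexSubalgebra_singleton_one, ha⟩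
  exact ⟨V, hV⟩

end ResiduatedLattice

theorem isPrimeConvex_sInter {α : Type u} [ResiduatedLattice α] {c : Set (Set α)}
    (hc : IsChain (· ⊆ ·) c) (h : ∀ P ∈ c, IsPrimeConvex P) : IsPrimeConvex (⋂₀ c) := by
  refine ⟨isConvexSubalgebra_sInter fun P hP => (h P hP).1, fun X Y hX hY hXY => ?_⟩
  have prime : ∀ P ∈ c, X ⊆ P ∨ Y ⊆ P := fun P hP =>
    (h P hP).2 X Y hX hY (hXY.trans (Set.sInter_subset_of_mem hP))
  rw [or_iff_not_imp_left, Set.subset_sInter_iff, Set.subset_sInter_iff]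
  intro hXc P hP
  push Not at hXc
  obtain ⟨P₀, hP₀, hXP₀⟩ := hXc
  rcases hc.total hP hP₀ with hPP₀ | hP₀P
  · exact (prime P hP).resolve_left fun hXP => hXP₀ (hXP.trans hPP₀)
  · exact ((prime P₀ hP₀).resolve_left hXP₀).trans hP₀P

theorem IsPrimeConvex.exists_isMinimalPrimeConvex_subset {α : Type u} [ResiduatedLattice α]
    {P : Set α} (hP : IsPrimeConvex P) (hPu : P ≠ Set.univ) :
    ∃ Q : Set α, IsMinimalPrimeConvex Q ∧ Q ⊆ P := by
  obtain ⟨Q, hQP, hQ⟩ := zorn_superset_nonempty {Q : Set α | IsPrimeConvex Q ∧ Q ⊆ P}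
    (fun c hcS hc ⟨Q₀, hQ₀⟩ => ⟨⋂₀ c,
      ⟨isPrimeConvex_sInter hc fun Q hQ => (hcS hQ).1,
        (Set.sInter_subset_of_mem hQ₀).trans (hcS hQ₀).2⟩,
      fun _ => Set.sInter_subset_of_mem⟩)
    P ⟨hP, subset_rfl⟩
  refine ⟨Q, ⟨hQ.1.1, fun hQu => hPu (Set.eq_univ_of_univ_subset (hQu ▸ hQP)), ?_⟩, hQP⟩
  exact fun Q' hQ' _ hQ'Q => hQ.eq_of_subset ⟨hQ', hQ'Q.trans hQP⟩ hQ'Q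

/-- every proper prime convex subalgebra contains a minimal prime one,
and the intersection of all minimal primes is `{e}`. -/
theorem stmt11 {α : Type u} [ResiduatedLattice α] (hec : ECyclic α) :
    (∀ P : Set α, IsPrimeConvex P → P ≠ Set.univ →
      ∃ Q : Set α, IsMinimalPrimeConvex Q ∧ Q ⊆ P) ∧
    ⋂₀ {P : Set α | IsMinimalPrimeConvex P} = {(1 : α)} := by
  refine ⟨fun P hP hPu => hP.exists_isMinimalPrimeConvex_subset hPu,
    Set.eq_singleton_iff_unique_mem.mpr ⟨fun Q hQ => hQ.1.1.one_mem, fun a ha => ?_⟩⟩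
  by_contra ha1
  obtain ⟨V, hV⟩ := exists_isValue ha1
  have hVu : V ≠ Set.univ := fun h => hV.1.2 (h ▸ Set.mem_univ a)
  obtain ⟨Q, hQ, hQV⟩ := (hV.isPrimeConvex hec).exists_isMinimalPrimeConvex_subset hVu
  exact hV.1.2 (hQV (ha Q hQ))
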